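/- Let q ≥ 1, n ≥ 1, k ≥ 2, and let f, g be formal power series in q variables over ℝ with ord g = m ∈ ℕ and g^n = f. Then for every multi-index c with |c| = m·n + k, one has f_c = G + n · Σ_b g_b · (Σ ∏_{i=1}^{n-1} g_{c^i}), where G = Σ ∏_{i=1}^n g_{c^i} summed over all n-tuples (c^1, …, c^n) of multi-indices with m ≤ |c^i| ≤ m+k−1 for every i and c^1 + … + c^n = c; the outer sum in the second term extends over all multi-indices b with |b| = m+k and b ≤ c componentwise; and the inner sum extends over all (n−1)-tuples (c^1, …, c^{n-1}) with |c^i| = m for every i and c^1 + … + c^{n-1} = c − b. -/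

import Mathlib

/-!
Expand `f_c = (g ^ n)_c` as the sum of `∏ g_{cⁱ}` over all `n`-tuples summing to `c`. A tuple with
an entry of degree `< m` contributes nothing. The degrees of a tuple add up to `m n + k`, so if all
of them are `≥ m`, the excess `k` sits either in entries of degree `< m + k` (the term `G`) or
entirely in one entry, which then has degree `m + k` while all the others have degree `m`; as
`k ≠ 0` that entry is unique. Sorting the latter tuples by the position of that entry gives `n`
sums, each equal to `Σ_b g_b · Σ ∏ g_{cⁱ}` by deleting the entry.
-/

open Finset MvPowerSeries

theorem Nat.eq_add_and_others_eq_of_sum_eq {ι : Type*} [Fintype ι] [DecidableEq ι]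
    {x : ι → ℕ} {m k : ℕ} (hle : ∀ j, m ≤ x j) (hsum : ∑ j, x j = m * Fintype.card ι + k)
    {i : ι} (hi : m + k ≤ x i) : x i = m + k ∧ ∀ j ≠ i, x j = m := by
  have hexcess : ∑ j, (x j - m) = k := by
    have : ∑ j, (x j - m) + m * Fintype.card ι = ∑ j, x j := by
      rw [mul_comm, ← smul_eq_mul, ← Finset.card_univ, ← sum_const, ← sum_add_distrib]
      exact sum_congr rfl fun j _ => Nat.sub_add_cancel (hle j)
    omega
  rw [← add_sum_erase _ _ (mem_univ i)] at hexcess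
  have hrest : ∀ j ∈ univ.erase i, x j - m = 0 := sum_eq_zero_iff.mp (by omega)
  refine ⟨by omega, fun j hj => ?_⟩
  have := hrest j (mem_erase.mpr ⟨hj, mem_univ j⟩)
  have := hle j
  omega

variable {σ R : Type*} [DecidableEq σ] [CommSemiring R]

theorem MvPowerSeries.coeff_pow_eq_sum_finAntidiagonal (g : MvPowerSeries σ R) (n : ℕ)
    (c : σ →₀ ℕ) : coeff c (g ^ n) = ∑ d ∈ finAntidiagonal n c, ∏ i, coeff (d i) g := by
  have : finAntidiagonal n c =
      (finsuppAntidiag univ c).map Finsupp.equivFunOnFinite.toEmbedding := by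
    ext d
    simp only [mem_finAntidiagonal, mem_map_equiv, mem_finsuppAntidiag, subset_univ, and_true]
    rfl
  rw [← Fin.prod_const, coeff_prod, this, sum_map]
  rfl

theorem sum_filter_finAntidiagonal_split_at {n : ℕ} (i : Fin n) (c : σ →₀ ℕ)
    (P Q : (σ →₀ ℕ) → Prop) [DecidablePred P] [DecidablePred Q] (a : (σ →₀ ℕ) → R) :
    ∑ d ∈ (finAntidiagonal n c).filter (fun d => P (d i) ∧ ∀ j ≠ i, Q (d j)), ∏ j, a (d j) =
      ∑ b ∈ (Iic c).filter P,
        a b * ∑ e ∈ (finAntidiagonal (n - 1) (c - b)).filter (fun e => ∀ j, Q (e j)),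
          ∏ j, a (e j) := by
  cases n with
  | zero => exact i.elim0
  | succ n =>
  simp only [mul_sum, sum_sigma']
  apply sum_nbij' (fun d => ⟨d i, i.removeNth d⟩) (fun x => i.insertNth x.1 x.2)
  · intro d hd
    simp only [mem_filter, mem_finAntidiagonal, Fin.sum_univ_succAbove _ i] at hd
    obtain ⟨hsum, hP, hQ⟩ := hd
    simp only [mem_sigma, mem_filter, mem_Iic, mem_finAntidiagonal, Fin.removeNth_apply]
    refine ⟨⟨hsum ▸ le_self_add, hP⟩, ?_, fun j => hQ _ (Fin.succAbove_ne i j)⟩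
    rw [← hsum, add_tsub_cancel_left]
    rfl
  · rintro ⟨b, e⟩ hx
    simp only [mem_sigma, mem_filter, mem_Iic, mem_finAntidiagonal] at hx
    obtain ⟨⟨hbc, hP⟩, hsum, hQ⟩ := hx
    simp only [mem_filter, mem_finAntidiagonal, Fin.sum_univ_succAbove _ i,
      Fin.insertNth_apply_same, Fin.insertNth_apply_succAbove]
    refine ⟨(congrArg (b + ·) hsum).trans (add_tsub_cancel_of_le hbc), hP, fun j hj => ?_⟩
    obtain ⟨j, rfl⟩ := Fin.exists_succAbove_eq hj
    simpa only [Fin.insertNth_apply_succAbove] using hQ j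
  · intro d _
    exact Fin.insertNth_self_removeNth i d
  · intro x _
    simp
  · intro d _
    exact Fin.prod_univ_succAbove _ i

theorem sum_finAntidiagonal_prod_of_degree_eq_mul_add {n m k : ℕ} (hk : k ≠ 0)
    {c : σ →₀ ℕ} (hc : c.degree = m * n + k) (a : (σ →₀ ℕ) → R)
    (ha : ∀ e : σ →₀ ℕ, e.degree < m → a e = 0) :
    ∑ d ∈ finAntidiagonal n c, ∏ i, a (d i) =
      ∑ d ∈ (finAntidiagonal n c).filter
          (fun d => ∀ i, m ≤ (d i).degree ∧ (d i).degree < m + k), ∏ i, a (d i) +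
        n * ∑ b ∈ (Iic c).filter (fun b => b.degree = m + k),
          a b * ∑ e ∈ (finAntidiagonal (n - 1) (c - b)).filter (fun e => ∀ i, (e i).degree = m),
            ∏ i, a (e i) := by
  set S := finAntidiagonal n c
  have hdeg : ∀ d ∈ S, ∑ i, (d i).degree = m * Fintype.card (Fin n) + k := fun d hd => by
    rw [← map_sum, mem_finAntidiagonal.mp hd, hc, Fintype.card_fin]
  have hlow : ∑ d ∈ S.filter (fun d => ∀ i, m ≤ (d i).degree), ∏ i, a (d i) =
      ∑ d ∈ S, ∏ i, a (d i) := by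
    refine sum_filter_of_ne fun d _ hne i => ?_
    by_contra! hi
    exact hne (prod_eq_zero (mem_univ i) (ha _ hi))
  have hhigh : S.filter (fun d => (∀ i, m ≤ (d i).degree) ∧ ¬ ∀ i, (d i).degree < m + k) =
      univ.biUnion fun i => S.filter fun d => (d i).degree = m + k ∧ ∀ j ≠ i, (d j).degree = m := by
    ext d
    simp only [mem_filter, mem_biUnion, mem_univ, true_and, not_forall, not_lt]
    constructor
    · rintro ⟨hd, hle, i, hi⟩
      exact ⟨i, hd, Nat.eq_add_and_others_eq_of_sum_eq hle (hdeg d hd) hi⟩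
    · rintro ⟨i, hd, hi, hj⟩
      refine ⟨hd, fun j => ?_, i, hi.ge⟩
      by_cases hji : j = i
      · subst hji
        omega
      · exact (hj j hji).ge
  have hdisj : ((univ : Finset (Fin n)) : Set (Fin n)).PairwiseDisjoint
      fun i => S.filter fun d => (d i).degree = m + k ∧ ∀ j ≠ i, (d j).degree = m := by
    intro i _ j _ hij
    refine disjoint_left.mpr fun d hdi hdj => hk ?_
    have := (mem_filter.mp hdi).2.2 j (Ne.symm hij)
    have := (mem_filter.mp hdj).2.1
    omega
  rw [← hlow, ← sum_filter_add_sum_filter_not _ (fun d => ∀ i, (d i).degree < m + k),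
    filter_filter, filter_filter, hhigh, sum_biUnion hdisj,
    sum_congr rfl fun i _ => sum_filter_finAntidiagonal_split_at i c
      (fun b => b.degree = m + k) (fun e => e.degree = m) a]
  simp only [sum_const, card_univ, Fintype.card_fin, nsmul_eq_mul, ← forall_and]

theorem coeff_order_add_eq_general {q n m k : ℕ} (hk : 2 ≤ k)
    (f g : MvPowerSeries (Fin q) ℝ)
    (hord : g.order = (m : ℕ∞)) (hgf : g ^ n = f) :
    ∀ c : Fin q →₀ ℕ, c.degree = m * n + k →
      MvPowerSeries.coeff c f =
        (∑ᶠ (d : Fin n → (Fin q →₀ ℕ))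
          (_ : (∀ i, m ≤ (d i).degree ∧ (d i).degree ≤ m + k - 1) ∧ ∑ i, d i = c),
          ∏ i, MvPowerSeries.coeff (d i) g)
        + (n : ℝ) * ∑ᶠ (b : Fin q →₀ ℕ) (_ : b.degree = m + k ∧ b ≤ c),
            MvPowerSeries.coeff b g *
              ∑ᶠ (d : Fin (n - 1) → (Fin q →₀ ℕ))
                (_ : (∀ i, (d i).degree = m) ∧ ∑ i, d i = c - b),
                ∏ i, MvPowerSeries.coeff (d i) g := by
  intro c hc
  have hlow : ∀ e : Fin q →₀ ℕ, e.degree < m → coeff e g = 0 := fun e he =>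
    coeff_of_lt_order (by rw [hord]; exact_mod_cast he)
  rw [← hgf, coeff_pow_eq_sum_finAntidiagonal,
    sum_finAntidiagonal_prod_of_degree_eq_mul_add (by omega) hc _ hlow]
  congr 2
  · refine (finsum_cond_eq_sum_of_cond_iff _ fun {d} _ => ?_).symm
    have hlt (x : ℕ) : x ≤ m + k - 1 ↔ x < m + k := by omega
    simp only [mem_filter, mem_finAntidiagonal, hlt, and_comm]
  · rw [finsum_cond_eq_sum_of_cond_iff _ (t := (Iic c).filter (·.degree = m + k))
      fun {b} _ => by simp [and_comm]]
    refine sum_congr rfl fun b _ => congrArg _ (finsum_cond_eq_sum_of_cond_iff _ fun {e} _ => ?_).symm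
    simp [and_comm]

/-- If `g` has order `m` and `g ^ n = f` (over `ℝ`, `q` variables), then for every
`k ≥ 2` and every multi-index `c` with `|c| = m·n + k`,
`f_c = G + n · Σ_{|b| = m+k, b ≤ c} g_b · (Σ g_{c¹} ⋯ g_{cⁿ⁻¹})`, where `G` sums the
products `g_{c¹} ⋯ g_{cⁿ}` over `n`-tuples with `m ≤ |cⁱ| ≤ m+k-1` summing to `c`,
and the inner sum runs over `(n-1)`-tuples of degree-`m` multi-indices summing to `c - b`. -/
theorem coeff_order_add_eq {q n m k : ℕ} (hq : 1 ≤ q) (hn : 1 ≤ n) (hk : 2 ≤ k)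
    (f g : MvPowerSeries (Fin q) ℝ)
    (hord : g.order = (m : ℕ∞)) (hgf : g ^ n = f) :
    ∀ c : Fin q →₀ ℕ, c.degree = m * n + k →
      MvPowerSeries.coeff c f =
        (∑ᶠ (d : Fin n → (Fin q →₀ ℕ))
          (_ : (∀ i, m ≤ (d i).degree ∧ (d i).degree ≤ m + k - 1) ∧ ∑ i, d i = c),
          ∏ i, MvPowerSeries.coeff (d i) g)
        + (n : ℝ) * ∑ᶠ (b : Fin q →₀ ℕ) (_ : b.degree = m + k ∧ b ≤ c),
            MvPowerSeries.coeff b g *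
              ∑ᶠ (d : Fin (n - 1) → (Fin q →₀ ℕ))
                (_ : (∀ i, (d i).degree = m) ∧ ∑ i, d i = c - b),
                ∏ i, MvPowerSeries.coeff (d i) g :=
  coeff_order_add_eq_general hk f g hord hgf
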